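/- arXiv:1807.09062 — 2 statements merged into one kernel-verified Lean document; each statement's English description precedes it below -/
import Mathlib

section
/- Let d ≥ 3 and let 𝒢 : ℝ^d × ℝ^d → ℝ be a measurable function which is locally integrable in each variable and satisfies |𝒢(x',y')| ≤ C₀ |x'−y'|^{2−d} for all x' ≠ y' and some constant C₀ > 0. For k ∈ ℤ^d define H^k(x,y) := 𝒢(x, y−k) − ∫_Q 𝒢(x, y+y'−k) dy' − ∫_Q 𝒢(x+x', y−k) dx' + ∫_Q ∫_Q 𝒢(x+x', y+y'−k) dy' dx'. Then there exists a constant C > 0 depending only on d and C₀ such that for every k ∈ ℤ^d and every x ∈ Q, y ∈ x + Q with x ≠ y, one has |H^k(x,y)| ≤ C |x−y|^{−d+2}. -/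
open MeasureTheory Metric Set
open scoped ENNReal NNReal
noncomputable section

abbrev Rd (d : ℕ) := EuclideanSpace ℝ (Fin d)

def cube (d : ℕ) : Set (Rd d) := {x | ∀ i, x i ∈ Set.Icc (-(1:ℝ)/2) (1/2)}

def latVec {d : ℕ} (z : Fin d → ℤ) : Rd d := WithLp.toLp 2 (fun i => (z i : ℝ))

def ZPeriodic {d : ℕ} {α : Type*} (f : Rd d → α) : Prop :=
  ∀ (x : Rd d) (z : Fin d → ℤ), f (x + latVec z) = f x

def IsElliptic {d : ℕ} (μ : ℝ) (A : Rd d → Matrix (Fin d) (Fin d) ℝ) : Prop :=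
  ∀ (x ξ : Rd d), μ * ‖ξ‖ ^ 2 ≤ ∑ i, ∑ j, ξ i * A x i j * ξ j ∧
    ∑ i, ∑ j, ξ i * A x i j * ξ j ≤ μ⁻¹ * ‖ξ‖ ^ 2

def ee {d : ℕ} (i : Fin d) : Rd d := EuclideanSpace.single i 1

def HasWeakGrad {d : ℕ} (f : Rd d → ℝ) (g : Rd d → Rd d) : Prop :=
  LocallyIntegrable f volume ∧ LocallyIntegrable g volume ∧
  ∀ φ : Rd d → ℝ, ContDiff ℝ (⊤ : ℕ∞) φ → HasCompactSupport φ → ∀ i,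
    ∫ x, f x * fderiv ℝ φ x (ee i) = -∫ x, g x i * φ x

structure PeriodicGreen (d : ℕ) (A : Rd d → Matrix (Fin d) (Fin d) ℝ) where
  G : Rd d → Rd d → ℝ
  gradx : Rd d → Rd d → Rd d
  measurable : Measurable (Function.uncurry G)
  periodic_x : ∀ y, ZPeriodic fun x => G x y
  periodic_y : ∀ x, ZPeriodic fun y => G x y
  hasGradx : ∀ y, HasWeakGrad (fun x => G x y) (fun x => gradx x y)
  mean_y : ∀ x, ∫ y in cube d, G x y = 0
  mean_x : ∀ y, ∫ x in cube d, G x y = 0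
  weak_form : ∀ φ : Rd d → ℝ, ContDiff ℝ (⊤ : ℕ∞) φ → ZPeriodic φ → ∀ y : Rd d,
    ∫ x in cube d, ∑ i, ∑ j, fderiv ℝ φ x (ee i) * A x i j * gradx x y j
      = φ y - ∫ x in cube d, φ x

/-- The terms H^k(x,y) of the decomposition of the periodic Green function. -/
def Hk {d : ℕ} (𝒢 : Rd d → Rd d → ℝ) (k : Fin d → ℤ) (x y : Rd d) : ℝ :=
  𝒢 x (y - latVec k) - (∫ y' in cube d, 𝒢 x (y + y' - latVec k))
    - (∫ x' in cube d, 𝒢 (x + x') (y - latVec k))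
    + ∫ x' in cube d, ∫ y' in cube d, 𝒢 (x + x') (y + y' - latVec k)


section Aux

lemma integrableOn_rpow_ball (d : ℕ) (hd : 3 ≤ d) {R : ℝ} (hR : 0 < R) :
    IntegrableOn (fun z : Rd d => ‖z‖ ^ (2 - (d:ℝ))) (ball (0 : Rd d) R) volume := by
  haveI : Nonempty (Fin d) := ⟨⟨0, by omega⟩⟩
  haveI : Nontrivial (Rd d) := inferInstance
  have hdr : (3:ℝ) ≤ (d:ℝ) := by exact_mod_cast hd
  have hmeas : Measurable (fun z : Rd d => ‖z‖ ^ (2 - (d:ℝ))) :=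
    measurable_norm.pow measurable_const
  refine ⟨hmeas.aestronglyMeasurable, ?_⟩
  rw [hasFiniteIntegral_iff_norm]
  set g : Rd d → ℝ := fun z => ‖z‖ ^ (2 - (d:ℝ)) with hg
  have hgnn : ∀ z, 0 ≤ g z := fun z => Real.rpow_nonneg (norm_nonneg _) _
  set A : ℕ → Set (Rd d) := fun n => {z | R / 2 ^ (n+1) ≤ ‖z‖} ∩ ball 0 (R / 2 ^ n) with hA
  have hsub : ball (0 : Rd d) R ⊆ {0} ∪ ⋃ n, A n := by
    intro z hz
    rcases eq_or_ne z 0 with rfl | hz0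
    · exact Or.inl rfl
    · right
      have hzpos : 0 < ‖z‖ := norm_pos_iff.mpr hz0
      have hzlt : ‖z‖ < R := by simpa [dist_zero_right] using hz
      obtain ⟨n, hn⟩ := pow_unbounded_of_one_lt (R / ‖z‖) (one_lt_two (α := ℝ))
      have hP : ∃ m, R / 2 ^ (m+1) ≤ ‖z‖ := by
        refine ⟨n, ?_⟩
        rw [div_le_iff₀ (by positivity)]
        rw [div_lt_iff₀ hzpos] at hn
        nlinarith [hzpos, pow_pos (two_pos (α := ℝ)) n, pow_succ (2:ℝ) n]
      set N := Nat.find hP with hN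
      refine mem_iUnion.mpr ⟨N, Nat.find_spec hP, ?_⟩
      rw [mem_ball, dist_zero_right]
      rcases Nat.eq_zero_or_pos N with h0 | hpos
      · rw [h0]; simpa using hzlt
      · have := Nat.find_min hP (m := N - 1) (by omega)
        push_neg at this
        have : ‖z‖ < R / 2 ^ (N - 1 + 1) := this
        rwa [Nat.sub_add_cancel hpos] at this
  calc ∫⁻ z in ball (0:Rd d) R, ENNReal.ofReal ‖g z‖
      ≤ ∫⁻ z in ({0} ∪ ⋃ n, A n : Set (Rd d)), ENNReal.ofReal ‖g z‖ :=
        lintegral_mono_set hsub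
    _ ≤ (∫⁻ z in ({0} : Set (Rd d)), ENNReal.ofReal ‖g z‖)
        + ∫⁻ z in (⋃ n, A n), ENNReal.ofReal ‖g z‖ := lintegral_union_le _ _ _
    _ = ∫⁻ z in (⋃ n, A n), ENNReal.ofReal ‖g z‖ := by
        rw [Measure.restrict_eq_zero.mpr (measure_singleton _), lintegral_zero_measure, zero_add]
    _ ≤ ∑' n, ∫⁻ z in A n, ENNReal.ofReal ‖g z‖ := lintegral_iUnion_le _ _
    _ ≤ ∑' n, ENNReal.ofReal ((2:ℝ) ^ ((d:ℝ) - 2) * R ^ 2 * (1/4) ^ n)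
          * volume (ball (0:Rd d) 1) := by
        refine ENNReal.tsum_le_tsum fun n => ?_
        have hb : (0:ℝ) < R / 2 ^ n := by positivity
        have hb2 : (0:ℝ) < R / 2 ^ (n+1) := by positivity
        have key : (R / 2 ^ (n+1)) ^ (2 - (d:ℝ)) * (R / 2 ^ n) ^ (d:ℕ)
            = (2:ℝ) ^ ((d:ℝ) - 2) * R ^ 2 * (1/4) ^ n := by
          have e1 : R / 2 ^ (n+1) = (R / 2 ^ n) / 2 := by rw [pow_succ]; ring
          rw [e1, Real.div_rpow hb.le (by norm_num), ← Real.rpow_natCast (R / 2 ^ n) d,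
            div_mul_eq_mul_div, ← Real.rpow_add hb]
          have e2 : (2 - (d:ℝ)) + (d:ℝ) = ((2:ℕ):ℝ) := by push_cast; ring
          rw [e2, Real.rpow_natCast]
          have h2' : (2:ℝ) ^ (2 - (d:ℝ)) = ((2:ℝ) ^ ((d:ℝ) - 2))⁻¹ := by
            rw [show (2:ℝ) - (d:ℝ) = -((d:ℝ) - 2) by ring, Real.rpow_neg (by norm_num)]
          rw [h2', div_eq_mul_inv, inv_inv, div_pow,
            show ((2:ℝ) ^ n) ^ 2 = 4 ^ n by rw [← pow_mul, mul_comm n 2, pow_mul]; norm_num]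
          have h4 : (0:ℝ) < (2:ℝ) ^ ((d:ℝ) - 2) := Real.rpow_pos_of_pos (by norm_num) _
          field_simp
          ring_nf
          rw [← mul_pow]; norm_num
        calc ∫⁻ z in A n, ENNReal.ofReal ‖g z‖
            ≤ ∫⁻ _ in A n, ENNReal.ofReal ((R / 2 ^ (n+1)) ^ (2 - (d:ℝ))) := by
              refine setLIntegral_mono measurable_const fun z hz => ?_
              refine ENNReal.ofReal_le_ofReal ?_
              rw [Real.norm_of_nonneg (hgnn z)]
              exact Real.rpow_le_rpow_of_nonpos hb2 hz.1 (by linarith)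
          _ = ENNReal.ofReal ((R / 2 ^ (n+1)) ^ (2 - (d:ℝ))) * volume (A n) := by
              rw [setLIntegral_const]
          _ ≤ ENNReal.ofReal ((R / 2 ^ (n+1)) ^ (2 - (d:ℝ)))
                * volume (ball (0:Rd d) (R / 2 ^ n)) := by
              exact mul_le_mul_right (measure_mono inter_subset_right) _
          _ = ENNReal.ofReal ((2:ℝ) ^ ((d:ℝ) - 2) * R ^ 2 * (1/4) ^ n)
                * volume (ball (0:Rd d) 1) := by
              rw [Measure.addHaar_ball volume 0 hb.le, finrank_euclideanSpace_fin, ← mul_assoc,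
                ← ENNReal.ofReal_mul (Real.rpow_nonneg hb2.le _), key]
    _ < ⊤ := by
        have h3 : ∀ n : ℕ, ENNReal.ofReal ((2:ℝ) ^ ((d:ℝ) - 2) * R ^ 2 * (1/4) ^ n)
            = ENNReal.ofReal ((2:ℝ) ^ ((d:ℝ) - 2) * R ^ 2) * ENNReal.ofReal (1/4) ^ n := by
          intro n
          rw [ENNReal.ofReal_mul (by positivity), ENNReal.ofReal_pow (by norm_num)]
        have h5 : ∑' n, ENNReal.ofReal ((2:ℝ) ^ ((d:ℝ)-2) * R^2 * (1/4)^n)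
              * volume (ball (0:Rd d) 1)
            = ENNReal.ofReal ((2:ℝ) ^ ((d:ℝ)-2) * R^2)
              * (∑' n : ℕ, ENNReal.ofReal (1/4) ^ n) * volume (ball (0:Rd d) 1) := by
          rw [ENNReal.tsum_mul_right]
          congr 1
          rw [← ENNReal.tsum_mul_left]
          exact tsum_congr h3
        rw [h5]
        refine ENNReal.mul_lt_top (ENNReal.mul_lt_top ENNReal.ofReal_lt_top ?_)
          measure_ball_lt_top
        rw [ENNReal.tsum_geometric]
        refine ENNReal.inv_lt_top.mpr ?_
        rw [tsub_pos_iff_lt]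
        exact ENNReal.ofReal_lt_one.mpr (by norm_num)

lemma cube_subset_closedBall (d : ℕ) : cube d ⊆ closedBall (0 : Rd d) (Real.sqrt d) := by
  intro z hz
  rw [mem_closedBall, dist_zero_right, EuclideanSpace.norm_eq]
  refine Real.sqrt_le_sqrt ?_
  calc ∑ i, ‖z i‖ ^ 2 ≤ ∑ _i : Fin d, (1:ℝ) := by
        refine Finset.sum_le_sum fun i _ => ?_
        have h := hz i
        have habs : |z i| ≤ 1/2 := abs_le.mpr ⟨by linarith [h.1], by linarith [h.2]⟩
        rw [Real.norm_eq_abs]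
        nlinarith [habs, abs_nonneg (z i)]
    _ = (d:ℝ) := by simp

lemma cube_volume_lt_top (d : ℕ) : volume (cube d) < ⊤ :=
  lt_of_le_of_lt (measure_mono (cube_subset_closedBall d)) measure_closedBall_lt_top

lemma pointwise_bound (d : ℕ) (hd : 3 ≤ d) {R : ℝ} (hR : 0 < R) (w : Rd d) :
    ‖w‖ ^ (2 - (d:ℝ)) ≤
      (ball (0:Rd d) R).indicator (fun v => ‖v‖ ^ (2 - (d:ℝ))) w + R ^ (2 - (d:ℝ)) := by
  have hdr : (3:ℝ) ≤ (d:ℝ) := by exact_mod_cast hd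
  by_cases hw : w ∈ ball (0:Rd d) R
  · rw [indicator_of_mem hw]
    have : (0:ℝ) ≤ R ^ (2 - (d:ℝ)) := Real.rpow_nonneg hR.le _
    linarith
  · rw [indicator_of_notMem hw]
    have hle : R ≤ ‖w‖ := by
      rw [mem_ball, dist_zero_right, not_lt] at hw; exact hw
    have := Real.rpow_le_rpow_of_nonpos hR hle (z := 2 - (d:ℝ)) (by linarith)
    have hnn : (0:ℝ) ≤ (ball (0:Rd d) R).indicator (fun v => ‖v‖ ^ (2 - (d:ℝ))) w := by
      rw [indicator_of_notMem hw]
    linarith [this, hnn]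

lemma core_bound (d : ℕ) (hd : 3 ≤ d) (C₀ : ℝ) (hC₀ : 0 < C₀)
    {F : Rd d → ℝ}
    (c : Rd d) (hF : ∀ z : Rd d, z ≠ c → |F z| ≤ C₀ * ‖c - z‖ ^ (2 - (d:ℝ))) :
    |∫ z in cube d, F z| ≤
      C₀ * ((∫ z in ball (0:Rd d) (Real.sqrt d), ‖z‖ ^ (2 - (d:ℝ)))
        + Real.sqrt d ^ (2 - (d:ℝ)) * (volume (cube d)).toReal) := by
  haveI : Nonempty (Fin d) := ⟨⟨0, by omega⟩⟩
  haveI : Nontrivial (Rd d) := inferInstance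
  have hR : (0:ℝ) < Real.sqrt d := Real.sqrt_pos.mpr (by exact_mod_cast (by omega : 0 < d))
  set R := Real.sqrt d with hRdef
  set g : Rd d → ℝ := fun v => ‖v‖ ^ (2 - (d:ℝ)) with hg
  set f : Rd d → ℝ := (ball (0:Rd d) R).indicator g with hf
  have hf_int : Integrable f volume :=
    (integrable_indicator_iff measurableSet_ball).mpr (integrableOn_rpow_ball d hd hR)
  have hf_nn : ∀ v, 0 ≤ f v := fun v =>
    indicator_nonneg (fun v _ => Real.rpow_nonneg (norm_nonneg _) _) v
  haveI : IsFiniteMeasure (volume.restrict (cube d)) :=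
    ⟨by rw [Measure.restrict_apply_univ]; exact cube_volume_lt_top d⟩
  set K := R ^ (2 - (d:ℝ)) with hK
  have hcomp : Integrable (fun z => f (c - z)) volume := hf_int.comp_sub_left c
  have hbound_int : Integrable (fun z => C₀ * (f (c - z) + K)) (volume.restrict (cube d)) :=
    ((hcomp.restrict).add (integrable_const K)).const_mul C₀
  have hae : ∀ᵐ z ∂(volume.restrict (cube d)), ‖F z‖ ≤ C₀ * (f (c - z) + K) := by
    have h0 : ∀ᵐ z : Rd d, z ≠ c := by
      have hs : volume ({c} : Set (Rd d)) = 0 := measure_singleton c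
      rw [ae_iff]
      simpa [not_not, setOf_eq_eq_singleton] using hs
    filter_upwards [ae_restrict_of_ae h0] with z hz
    rw [Real.norm_eq_abs]
    calc |F z| ≤ C₀ * ‖c - z‖ ^ (2 - (d:ℝ)) := hF z hz
      _ ≤ C₀ * (f (c - z) + K) := by
          refine mul_le_mul_of_nonneg_left ?_ hC₀.le
          exact pointwise_bound d hd hR (c - z)
  have hmain := norm_integral_le_of_norm_le hbound_int hae
  rw [Real.norm_eq_abs] at hmain
  refine hmain.trans ?_
  rw [integral_const_mul]
  refine mul_le_mul_of_nonneg_left ?_ hC₀.le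
  rw [integral_add hcomp.restrict (integrable_const K), setIntegral_const]
  have h1 : ∫ z in cube d, f (c - z) ≤ ∫ z, f (c - z) :=
    setIntegral_le_integral hcomp (Filter.Eventually.of_forall fun z => hf_nn _)
  have h2 : ∫ z, f (c - z) = ∫ z in ball (0:Rd d) R, g z := by
    rw [integral_sub_left_eq_self f volume c, hf, integral_indicator measurableSet_ball]
  rw [h2] at h1
  rw [smul_eq_mul, measureReal_def]
  have : (volume (cube d)).toReal * K = K * (volume (cube d)).toReal := mul_comm _ _
  linarith [h1]

lemma abs_coord_le_norm {d : ℕ} (w : Rd d) (i : Fin d) : |w i| ≤ ‖w‖ := by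
  have h1 : |w i| = Real.sqrt (‖w i‖ ^ 2) := by
    rw [Real.norm_eq_abs, Real.sqrt_sq_eq_abs, abs_abs]
  rw [h1, EuclideanSpace.norm_eq]
  exact Real.sqrt_le_sqrt (Finset.single_le_sum (f := fun j => ‖w j‖ ^ 2)
    (fun j _ => sq_nonneg _) (Finset.mem_univ i))

end Aux

/-- uniform bound |H^k(x,y)| ≤ C|x−y|^{2−d}, with C depending
only on d and C₀. -/
theorem stmt_12 (d : ℕ) (hd : 3 ≤ d) (C₀ : ℝ) (hC₀ : 0 < C₀) :
    ∃ C > (0:ℝ), ∀ 𝒢 : Rd d → Rd d → ℝ,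
      Measurable (Function.uncurry 𝒢) →
      (∀ x : Rd d, LocallyIntegrable (fun y => 𝒢 x y) volume) →
      (∀ y : Rd d, LocallyIntegrable (fun x => 𝒢 x y) volume) →
      (∀ x y : Rd d, x ≠ y → |𝒢 x y| ≤ C₀ * ‖x - y‖ ^ (2 - (d:ℝ))) →
      ∀ k : Fin d → ℤ, ∀ x y : Rd d, x ∈ cube d → y - x ∈ cube d → x ≠ y →
        |Hk 𝒢 k x y| ≤ C * ‖x - y‖ ^ (-(d:ℝ) + 2) := by
  have hdr : (3:ℝ) ≤ (d:ℝ) := by exact_mod_cast hd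
  have hR : (0:ℝ) < Real.sqrt d := Real.sqrt_pos.mpr (by exact_mod_cast (by omega : 0 < d))
  set R := Real.sqrt d with hRdef
  have hexp : 2 - (d:ℝ) ≤ 0 := by linarith
  set Ic := ∫ z in ball (0:Rd d) R, ‖z‖ ^ (2 - (d:ℝ)) with hIc
  set V := (volume (cube d)).toReal with hV
  set K := R ^ (2 - (d:ℝ)) with hK
  set B := C₀ * (Ic + K * V) with hB
  have hIcnn : 0 ≤ Ic :=
    setIntegral_nonneg measurableSet_ball fun z _ => Real.rpow_nonneg (norm_nonneg _) _
  have hKnn : 0 ≤ K := Real.rpow_nonneg hR.le _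
  have hVnn : 0 ≤ V := ENNReal.toReal_nonneg
  have hBnn : 0 ≤ B := mul_nonneg hC₀.le (by positivity)
  set K2 := ((1:ℝ)/2) ^ (2 - (d:ℝ)) with hK2
  have hK2nn : 0 ≤ K2 := Real.rpow_nonneg (by norm_num) _
  set D := C₀ * K2 + 2 * B + B * V with hD
  have hDnn : 0 ≤ D := by positivity
  have hRp : 0 ≤ R ^ ((d:ℝ) - 2) := Real.rpow_nonneg hR.le _
  set C := C₀ + D * R ^ ((d:ℝ) - 2) with hC
  have hCpos : 0 < C := by
    have : 0 ≤ D * R ^ ((d:ℝ) - 2) := mul_nonneg hDnn hRp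
    rw [hC]; linarith
  refine ⟨C, hCpos, ?_⟩
  intro 𝒢 h𝒢m h𝒢ly h𝒢lx hbd k x y hx hyx hxy
  haveI : IsFiniteMeasure (volume.restrict (cube d)) :=
    ⟨by rw [Measure.restrict_apply_univ]; exact cube_volume_lt_top d⟩
  -- term 2
  have ht2 : |∫ y' in cube d, 𝒢 x (y + y' - latVec k)| ≤ B := by
    refine core_bound d hd C₀ hC₀ (x - y + latVec k) ?_
    intro z hz
    have hne : x ≠ y + z - latVec k := fun h => hz (by rw [h]; abel)
    have harg : x - (y + z - latVec k) = (x - y + latVec k) - z := by abel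
    have := hbd x (y + z - latVec k) hne
    rwa [harg] at this
  -- term 3
  have ht3 : |∫ x' in cube d, 𝒢 (x + x') (y - latVec k)| ≤ B := by
    refine core_bound d hd C₀ hC₀ (y - latVec k - x) ?_
    intro z hz
    have hne : x + z ≠ y - latVec k := fun h => hz (by rw [← h]; abel)
    have harg : (x + z) - (y - latVec k) = -((y - latVec k - x) - z) := by abel
    have := hbd (x + z) (y - latVec k) hne
    rwa [harg, norm_neg] at this
  -- term 4
  have ht4 : |∫ x' in cube d, ∫ y' in cube d, 𝒢 (x + x') (y + y' - latVec k)| ≤ B * V := by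
    have hin : ∀ x' : Rd d, |∫ y' in cube d, 𝒢 (x + x') (y + y' - latVec k)| ≤ B := by
      intro x'
      refine core_bound d hd C₀ hC₀ ((x + x') - y + latVec k) ?_
      intro z hz
      have hne : x + x' ≠ y + z - latVec k := fun h => hz (by rw [h]; abel)
      have harg : (x + x') - (y + z - latVec k) = ((x + x') - y + latVec k) - z := by abel
      have := hbd (x + x') (y + z - latVec k) hne
      rwa [harg] at this
    have hmain := norm_integral_le_of_norm_le_const (μ := volume.restrict (cube d))
      (f := fun x' => ∫ y' in cube d, 𝒢 (x + x') (y + y' - latVec k)) (C := B)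
      (Filter.Eventually.of_forall fun x' => by rw [Real.norm_eq_abs]; exact hin x')
    rw [Real.norm_eq_abs, measureReal_restrict_apply_univ, measureReal_def] at hmain
    exact hmain
  -- term 1
  have ht1 : |𝒢 x (y - latVec k)| ≤ C₀ * ‖x - y‖ ^ (2 - (d:ℝ)) + C₀ * K2 := by
    by_cases hk : ∀ i, k i = 0
    · have hk0 : latVec k = 0 := by
        ext i; simp [latVec, hk i]
      have hne : x ≠ y - latVec k := by rw [hk0, sub_zero]; exact hxy
      have h := hbd x (y - latVec k) hne
      rw [hk0, sub_zero] at h ⊢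
      have : 0 ≤ C₀ * K2 := mul_nonneg hC₀.le hK2nn
      linarith
    · push_neg at hk
      obtain ⟨i, hki⟩ := hk
      have h1 : (x - (y - latVec k)) i = (k i : ℝ) - (y i - x i) := by
        simp [latVec]; ring
      have hyx_i := hyx i
      have h2 : (y - x) i = y i - x i := by simp
      rw [h2] at hyx_i
      have hyxi : |y i - x i| ≤ 1/2 :=
        abs_le.mpr ⟨by linarith [hyx_i.1], by linarith [hyx_i.2]⟩
      have hki1 : (1:ℝ) ≤ |(k i : ℝ)| := by
        have := Int.one_le_abs hki
        exact_mod_cast this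
      have hco : (1:ℝ)/2 ≤ |(x - (y - latVec k)) i| := by
        rw [h1]
        calc (1:ℝ)/2 ≤ |(k i:ℝ)| - |y i - x i| := by linarith
          _ ≤ |(k i:ℝ) - (y i - x i)| := abs_sub_abs_le_abs_sub _ _
      have hnorm : (1:ℝ)/2 ≤ ‖x - (y - latVec k)‖ :=
        le_trans hco (abs_coord_le_norm _ i)
      have hne : x ≠ y - latVec k := by
        intro h
        rw [h] at hnorm
        simp at hnorm
        linarith
      have hb1 := hbd x (y - latVec k) hne
      have hb2 : ‖x - (y - latVec k)‖ ^ (2 - (d:ℝ)) ≤ K2 := by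
        rw [hK2]
        exact Real.rpow_le_rpow_of_nonpos (by norm_num) hnorm hexp
      have h3 : |𝒢 x (y - latVec k)| ≤ C₀ * K2 :=
        le_trans hb1 (mul_le_mul_of_nonneg_left hb2 hC₀.le)
      have h4 : 0 ≤ C₀ * ‖x - y‖ ^ (2 - (d:ℝ)) :=
        mul_nonneg hC₀.le (Real.rpow_nonneg (norm_nonneg _) _)
      linarith
  -- triangle inequality
  have htri : ∀ a b c e : ℝ, |a - b - c + e| ≤ |a| + |b| + |c| + |e| := by
    intro a b c e
    calc |a - b - c + e| ≤ |a - b - c| + |e| := abs_add_le _ _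
      _ ≤ |a - b| + |c| + |e| := by
          have : |a - b - c| ≤ |a - b| + |c| := by
            rw [sub_eq_add_neg (a - b) c]
            exact (abs_add_le _ _).trans (by rw [abs_neg])
          linarith
      _ ≤ |a| + |b| + |c| + |e| := by
          have : |a - b| ≤ |a| + |b| := by
            rw [sub_eq_add_neg]
            exact (abs_add_le _ _).trans (by rw [abs_neg])
          linarith
  have habs : |Hk 𝒢 k x y| ≤ |𝒢 x (y - latVec k)|
      + |∫ y' in cube d, 𝒢 x (y + y' - latVec k)|
      + |∫ x' in cube d, 𝒢 (x + x') (y - latVec k)|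
      + |∫ x' in cube d, ∫ y' in cube d, 𝒢 (x + x') (y + y' - latVec k)| := by
    rw [Hk]
    exact htri _ _ _ _
  -- final comparison
  have hxy' : 0 < ‖x - y‖ := norm_pos_iff.mpr (sub_ne_zero.mpr hxy)
  have hxyR : ‖x - y‖ ≤ R := by
    have h := cube_subset_closedBall d hyx
    rw [mem_closedBall, dist_zero_right] at h
    calc ‖x - y‖ = ‖y - x‖ := by rw [← neg_sub, norm_neg]
      _ ≤ R := h
  have hrp : K ≤ ‖x - y‖ ^ (2 - (d:ℝ)) := by
    rw [hK]
    exact Real.rpow_le_rpow_of_nonpos hxy' hxyR hexp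
  have hone : R ^ ((d:ℝ) - 2) * K = 1 := by
    rw [hK, ← Real.rpow_add hR]; norm_num
  have hDle : D ≤ D * R ^ ((d:ℝ) - 2) * ‖x - y‖ ^ (2 - (d:ℝ)) := by
    calc D = D * (R ^ ((d:ℝ) - 2) * K) := by rw [hone, mul_one]
      _ ≤ D * (R ^ ((d:ℝ) - 2) * ‖x - y‖ ^ (2 - (d:ℝ))) := by
          refine mul_le_mul_of_nonneg_left ?_ hDnn
          exact mul_le_mul_of_nonneg_left hrp hRp
      _ = D * R ^ ((d:ℝ) - 2) * ‖x - y‖ ^ (2 - (d:ℝ)) := by ring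
  have hE : -(d:ℝ) + 2 = 2 - (d:ℝ) := by ring
  rw [hE]
  have hCexp : C * ‖x - y‖ ^ (2 - (d:ℝ))
      = C₀ * ‖x - y‖ ^ (2 - (d:ℝ)) + D * R ^ ((d:ℝ) - 2) * ‖x - y‖ ^ (2 - (d:ℝ)) := by
    rw [hC]; ring
  linarith [habs, ht1, ht2, ht3, ht4, hDle, hCexp]
end
end

section
/- Let d ≥ 3, let B be a symmetric positive definite d×d real matrix, and define 𝒢⋆ : ℝ^d ∖ {0} → ℝ by 𝒢⋆(x) = (x·B^{−1}x)^{−(d−2)/2}. Then for all real numbers 0 < a < b and all i, j ∈ {1,…,d}, the integral of the (i,j) entry of the Hessian of 𝒢⋆ over the ellipsoidal annulus vanishes: ∫_{{x ∈ ℝ^d : a² ≤ x·B^{−1}x < b²}} ∂_i∂_j 𝒢⋆(x) dx = 0. -/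
open MeasureTheory Metric Set
open scoped ENNReal NNReal
noncomputable section

/-- The quadratic form x ↦ x·B⁻¹x. -/
def qB {d : ℕ} (B : Matrix (Fin d) (Fin d) ℝ) (x : Rd d) : ℝ :=
  ∑ i, ∑ j, x i * B⁻¹ i j * x j

/-- The anisotropic fundamental solution 𝒢⋆(x) = (x·B⁻¹x)^{−(d−2)/2}. -/
def gStarB {d : ℕ} (B : Matrix (Fin d) (Fin d) ℝ) (x : Rd d) : ℝ :=
  (qB B x) ^ (-((d:ℝ) - 2) / 2)

/-- The (i,j) entry of the Hessian of 𝒢⋆. -/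
def hessB {d : ℕ} (B : Matrix (Fin d) (Fin d) ℝ) (x : Rd d) (i j : Fin d) : ℝ :=
  fderiv ℝ (fun z => fderiv ℝ (gStarB B) z (ee i)) x (ee j)

namespace S16

variable {d : ℕ}

/-- The exponent. -/
def cE (d : ℕ) : ℝ := -((d:ℝ) - 2) / 2

/-- Sum of squares of the coordinates. -/
def r2 (y : Rd d) : ℝ := ∑ k, y k ^ 2

lemma continuous_coord (k : Fin d) : Continuous fun y : Rd d => y k :=
  (EuclideanSpace.proj k).continuous

lemma continuous_r2 : Continuous (r2 (d := d)) :=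
  continuous_finset_sum _ fun k _ => (continuous_coord k).pow 2

lemma continuous_qB (B : Matrix (Fin d) (Fin d) ℝ) : Continuous (qB B) :=
  continuous_finset_sum _ fun i _ => continuous_finset_sum _ fun j _ =>
    (((continuous_coord i).mul continuous_const).mul (continuous_coord j))

/-- The linear functional `x ↦ (B⁻¹ x)ᵢ`. -/
def mvL (B : Matrix (Fin d) (Fin d) ℝ) (i : Fin d) : Rd d →L[ℝ] ℝ :=
  ∑ l, B⁻¹ i l • EuclideanSpace.proj l

lemma mvL_apply (B : Matrix (Fin d) (Fin d) ℝ) (i : Fin d) (x : Rd d) :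
    mvL B i x = ∑ l, B⁻¹ i l * x l := by
  simp [mvL]

lemma mvL_ee (B : Matrix (Fin d) (Fin d) ℝ) (i j : Fin d) :
    mvL B i (ee j) = B⁻¹ i j := by
  have h : ∀ l, (ee (d := d) j) l = if l = j then (1:ℝ) else 0 := fun l => by
    simp [ee, EuclideanSpace.single_apply]
  simp [mvL_apply, h, mul_ite]

/-- The derivative of `qB`. -/
def qD (B : Matrix (Fin d) (Fin d) ℝ) (x : Rd d) : Rd d →L[ℝ] ℝ :=
  ∑ i, ∑ j, B⁻¹ i j • (x i • EuclideanSpace.proj j + x j • EuclideanSpace.proj i)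

lemma hasFDerivAt_qB (B : Matrix (Fin d) (Fin d) ℝ) (x : Rd d) :
    HasFDerivAt (qB B) (qD B x) x := by
  have hfun : qB B = fun x : Rd d => ∑ i, ∑ j, B⁻¹ i j * (x i * x j) := by
    funext x
    exact Finset.sum_congr rfl fun i _ => Finset.sum_congr rfl fun j _ => by ring
  rw [hfun]
  have hp : ∀ m : Fin d, HasFDerivAt (fun x : Rd d => x m)
      (EuclideanSpace.proj m : Rd d →L[ℝ] ℝ) x :=
    fun m => (EuclideanSpace.proj m : Rd d →L[ℝ] ℝ).hasFDerivAt
  exact HasFDerivAt.fun_sum fun i _ => HasFDerivAt.fun_sum fun j _ =>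
    (((hp i).mul (hp j)).const_mul _)

lemma qD_ee (B : Matrix (Fin d) (Fin d) ℝ) (hsym : ∀ i j, B⁻¹ i j = B⁻¹ j i)
    (x : Rd d) (k : Fin d) :
    qD B x (ee k) = 2 * mvL B k x := by
  have h : ∀ l, (ee (d := d) k) l = if l = k then (1:ℝ) else 0 := fun l => by
    simp [ee, EuclideanSpace.single_apply]
  simp only [qD, ContinuousLinearMap.sum_apply, ContinuousLinearMap.smul_apply,
    ContinuousLinearMap.add_apply, PiLp.proj_apply, smul_eq_mul]
  have step : ∀ i j, B⁻¹ i j * (x i * (ee (d := d) k) j + x j * (ee (d := d) k) i)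
      = (if j = k then B⁻¹ i j * x i else 0) + (if i = k then B⁻¹ i j * x j else 0) := by
    intro i j
    rw [h, h]
    by_cases h1 : j = k <;> by_cases h2 : i = k <;> simp [h1, h2] <;> ring
  rw [Finset.sum_congr rfl fun i _ => Finset.sum_congr rfl fun j _ => step i j]
  simp only [Finset.sum_add_distrib]
  rw [Finset.sum_comm (s := Finset.univ) (t := Finset.univ)
    (f := fun i j => if i = k then B⁻¹ i j * x j else 0)]
  simp only [Finset.sum_ite_eq', Finset.mem_univ, if_true]
  rw [mvL_apply]
  have h1 : ∑ i, B⁻¹ i k * x i = ∑ i, B⁻¹ k i * x i :=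
    Finset.sum_congr rfl fun i _ => by rw [hsym i k]
  rw [h1]
  ring

lemma hasFDerivAt_gStar (B : Matrix (Fin d) (Fin d) ℝ) {x : Rd d} (hx : qB B x ≠ 0) :
    HasFDerivAt (gStarB B) ((cE d * qB B x ^ (cE d - 1)) • qD B x) x :=
  (hasFDerivAt_qB B x).rpow_const (Or.inl hx)

lemma fderiv_gStar (B : Matrix (Fin d) (Fin d) ℝ) (hsym : ∀ i j, B⁻¹ i j = B⁻¹ j i)
    {x : Rd d} (hx : 0 < qB B x) (i : Fin d) :
    fderiv ℝ (gStarB B) x (ee i) = (2 * cE d) * (qB B x ^ (cE d - 1) * mvL B i x) := by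
  rw [(hasFDerivAt_gStar B hx.ne').fderiv, ContinuousLinearMap.smul_apply,
    qD_ee B hsym x i, smul_eq_mul]
  ring

lemma hessB_eq (B : Matrix (Fin d) (Fin d) ℝ) (hsym : ∀ i j, B⁻¹ i j = B⁻¹ j i)
    {x : Rd d} (hx : 0 < qB B x) (i j : Fin d) :
    hessB B x i j = 2 * cE d * (qB B x ^ (cE d - 1)) * B⁻¹ i j
      + 4 * cE d * (cE d - 1) * (qB B x ^ (cE d - 2)) * mvL B i x * mvL B j x := by
  have hU : IsOpen {z : Rd d | 0 < qB B z} := isOpen_lt continuous_const (continuous_qB B)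
  have hev : (fun z => fderiv ℝ (gStarB B) z (ee i)) =ᶠ[nhds x]
      (fun z => (2 * cE d) * (qB B z ^ (cE d - 1) * mvL B i z)) :=
    Filter.eventually_of_mem (hU.mem_nhds hx) fun z hz => fderiv_gStar B hsym hz i
  have h1 : HasFDerivAt (fun z : Rd d => qB B z ^ (cE d - 1))
      (((cE d - 1) * qB B x ^ (cE d - 1 - 1)) • qD B x) x :=
    (hasFDerivAt_qB B x).rpow_const (Or.inl hx.ne')
  have h2 : HasFDerivAt (fun z => (2 * cE d) * (qB B z ^ (cE d - 1) * mvL B i z))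
      ((2 * cE d) • ((qB B x ^ (cE d - 1)) • (mvL B i)
        + (mvL B i x) • (((cE d - 1) * qB B x ^ (cE d - 1 - 1)) • qD B x))) x :=
    (h1.mul (mvL B i).hasFDerivAt).const_mul (2 * cE d)
  rw [hessB, hev.fderiv_eq, h2.fderiv]
  simp only [ContinuousLinearMap.smul_apply, ContinuousLinearMap.add_apply, smul_eq_mul]
  rw [mvL_ee, qD_ee B hsym x j]
  have h21 : cE d - 1 - 1 = cE d - 2 := by ring
  rw [h21]
  ring

/-- Reflection of the `k`-th coordinate as a linear equivalence. -/
def negEquiv (k : Fin d) : Rd d ≃ₗ[ℝ] Rd d where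
  toFun x := WithLp.toLp 2 fun m => if m = k then -x m else x m
  invFun x := WithLp.toLp 2 fun m => if m = k then -x m else x m
  map_add' x y := by
    ext m; by_cases h : m = k <;> simp [h, PiLp.add_apply] <;> ring
  map_smul' c x := by
    ext m; by_cases h : m = k <;> simp [h, PiLp.smul_apply, smul_eq_mul] <;> ring
  left_inv x := by ext m; by_cases h : m = k <;> simp [h]
  right_inv x := by ext m; by_cases h : m = k <;> simp [h]

lemma negEquiv_apply (k : Fin d) (x : Rd d) (m : Fin d) :
    negEquiv k x m = if m = k then -x m else x m := rfl

/-- Reflection of the `k`-th coordinate as a linear isometry equivalence. -/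
def negIso (k : Fin d) : Rd d ≃ₗᵢ[ℝ] Rd d :=
  ⟨negEquiv k, by
    intro x
    rw [EuclideanSpace.norm_eq, EuclideanSpace.norm_eq]
    congr 1
    refine Finset.sum_congr rfl fun m _ => ?_
    rw [negEquiv_apply]
    by_cases h : m = k <;> simp [h]⟩

lemma negIso_apply (k : Fin d) (x : Rd d) (m : Fin d) :
    negIso k x m = if m = k then -x m else x m := rfl

lemma r2_negIso (k : Fin d) (x : Rd d) : r2 (negIso k x) = r2 x := by
  unfold r2
  refine Finset.sum_congr rfl fun m _ => ?_
  rw [negIso_apply]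
  by_cases h : m = k <;> simp [h]

/-- Swap of two coordinates as a linear isometry equivalence. -/
def swapIso (k l : Fin d) : Rd d ≃ₗᵢ[ℝ] Rd d :=
  LinearIsometryEquiv.piLpCongrLeft 2 ℝ ℝ (Equiv.swap k l)

lemma swapIso_apply (k l : Fin d) (x : Rd d) (m : Fin d) :
    swapIso k l x m = x (Equiv.swap k l m) := by
  rw [swapIso, LinearIsometryEquiv.piLpCongrLeft_apply]
  simp [Equiv.piCongrLeft'_apply]

lemma r2_swapIso (k l : Fin d) (x : Rd d) : r2 (swapIso k l x) = r2 x := by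
  unfold r2
  rw [Finset.sum_congr rfl fun m _ => by rw [swapIso_apply]]
  exact Equiv.sum_comp (Equiv.swap k l) fun m => x m ^ 2

/-- Integrals over sets invariant under a linear isometry are invariant. -/
lemma integral_comp_isometry (Φ : Rd d ≃ₗᵢ[ℝ] Rd d) (g : Rd d → ℝ) (s : Set (Rd d))
    (hs : ⇑Φ ⁻¹' s = s) :
    ∫ x in s, g (Φ x) = ∫ x in s, g x := by
  have h := (Φ.measurePreserving).setIntegral_preimage_emb
    Φ.toHomeomorph.measurableEmbedding g s
  rw [hs] at h
  exact h

open scoped MatrixOrder in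
lemma exists_sqrt (A : Matrix (Fin d) (Fin d) ℝ) (hA : A.PosSemidef) :
    ∃ N : Matrix (Fin d) (Fin d) ℝ, N.PosSemidef ∧ N * N = A :=
  ⟨CFC.sqrt A, Matrix.nonneg_iff_posSemidef.mp (CFC.sqrt_nonneg A),
    CFC.sqrt_mul_sqrt_self A hA.nonneg⟩

end S16

open S16
open Matrix in

/-- the integral of each Hessian entry of 𝒢⋆ over an ellipsoidal
annulus {a² ≤ x·B⁻¹x < b²} vanishes. -/
theorem stmt_16 (d : ℕ) (hd : 3 ≤ d) (B : Matrix (Fin d) (Fin d) ℝ)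
    (hB : B.PosDef) (a b : ℝ) (ha : 0 < a) (hab : a < b) (i j : Fin d) :
    ∫ x in {x : Rd d | a ^ 2 ≤ qB B x ∧ qB B x < b ^ 2}, hessB B x i j = 0 := by
  classical
  set c : ℝ := cE d with hc
  -- basic matrix facts
  have hMpd : (B⁻¹).PosDef := hB.inv
  have hMh : (B⁻¹).IsHermitian := hMpd.isHermitian
  have hsym : ∀ p q, B⁻¹ p q = B⁻¹ q p := by
    intro p q
    simpa using hMh.apply q p
  set N : Matrix (Fin d) (Fin d) ℝ := Classical.choose (exists_sqrt _ hMpd.posSemidef) with hNdef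
  have hNps : N.PosSemidef := (Classical.choose_spec (exists_sqrt _ hMpd.posSemidef)).1
  have hNh : N.IsHermitian := hNps.1
  have hNsym : ∀ p q, N p q = N q p := by
    intro p q
    simpa using hNh.apply q p
  have hNN : N * N = B⁻¹ := (Classical.choose_spec (exists_sqrt _ hMpd.posSemidef)).2
  have hMdet : 0 < (B⁻¹).det := hMpd.det_pos
  have hNdet : N.det ≠ 0 := by
    intro h0
    rw [← hNN, Matrix.det_mul, h0, mul_zero] at hMdet
    exact lt_irrefl _ hMdet
  set P : Matrix (Fin d) (Fin d) ℝ := N⁻¹ with hPdef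
  have hNP : N * P = 1 := Matrix.mul_nonsing_inv N (isUnit_iff_ne_zero.mpr hNdet)
  have hPN : P * N = 1 := Matrix.nonsing_inv_mul N (isUnit_iff_ne_zero.mpr hNdet)
  have hPdetne : P.det ≠ 0 := by
    intro h0
    have := congrArg Matrix.det hPN
    rw [Matrix.det_mul, h0, zero_mul, Matrix.det_one] at this
    exact zero_ne_one this
  have hMP : B⁻¹ * P = N := by rw [← hNN, Matrix.mul_assoc, hNP, mul_one]
  have hNsymT : Matrix.transpose N = N := hNh
  -- the linear change of variables
  set TL : Rd d →ₗ[ℝ] Rd d := Matrix.toEuclideanLin P with hTL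
  have hdetTL : LinearMap.det TL = P.det := by
    rw [hTL, Matrix.toEuclideanLin_eq_toLin, LinearMap.det_toLin]
  have hTLdetne : LinearMap.det TL ≠ 0 := by rw [hdetTL]; exact hPdetne
  set eL : Rd d ≃ₗ[ℝ] Rd d := LinearEquiv.ofLinear TL (Matrix.toEuclideanLin N)
    (by rw [hTL, Matrix.toEuclideanLin_eq_toLin, ← Matrix.toLin_mul, hPN, Matrix.toLin_one])
    (by rw [hTL, Matrix.toEuclideanLin_eq_toLin, ← Matrix.toLin_mul, hNP, Matrix.toLin_one])
    with heL
  have heLcoe : ⇑eL = ⇑TL := rfl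
  set φ : Rd d → Rd d := ⇑TL with hφ
  have hφemb : MeasurableEmbedding φ := by
    have := eL.toContinuousLinearEquiv.toHomeomorph.measurableEmbedding
    simpa [heLcoe, LinearEquiv.coe_toContinuousLinearEquiv'] using this
  have hφcoord : ∀ (y : Rd d) (m : Fin d), φ y m = (P *ᵥ (fun k => y k)) m := fun y m => rfl
  -- the sets
  set s : Set (Rd d) := {x : Rd d | a ^ 2 ≤ qB B x ∧ qB B x < b ^ 2} with hs
  set s' : Set (Rd d) := {y : Rd d | a ^ 2 ≤ r2 y ∧ r2 y < b ^ 2} with hs'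
  have hsmeas : MeasurableSet s := by
    have : s = qB B ⁻¹' (Set.Ico (a ^ 2) (b ^ 2)) := rfl
    rw [this]
    exact (continuous_qB B).measurable measurableSet_Ico
  have hs'meas : MeasurableSet s' := by
    have : s' = r2 ⁻¹' (Set.Ico (a ^ 2) (b ^ 2)) := rfl
    rw [this]
    exact continuous_r2.measurable measurableSet_Ico
  -- quadratic form transforms to sum of squares
  have hdot : ∀ (A : Matrix (Fin d) (Fin d) ℝ) (u : Fin d → ℝ),
      (∑ p, ∑ q, u p * A p q * u q) = u ⬝ᵥ (A *ᵥ u) := by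
    intro A u
    simp [dotProduct, Matrix.mulVec, Finset.mul_sum, mul_assoc]
  have hqφ : ∀ y : Rd d, qB B (φ y) = r2 y := by
    intro y
    have h1 : qB B (φ y) = (fun k => φ y k) ⬝ᵥ (B⁻¹ *ᵥ fun k => φ y k) := by
      rw [qB, hdot]
    have h2 : (fun k => φ y k) = P *ᵥ (fun k => y k) := by
      funext m; exact hφcoord y m
    rw [h1, h2, Matrix.mulVec_mulVec, hMP, dotProduct_mulVec]
    have h3 : (P *ᵥ (fun k => y k)) ᵥ* N = (fun k => y k) := by
      rw [← hNsymT, ← Matrix.mulVec_transpose, Matrix.transpose_transpose,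
        Matrix.mulVec_mulVec, hNP, Matrix.one_mulVec]
    rw [h3]
    simp [r2, dotProduct, sq]
  have hpre : φ ⁻¹' s = s' := by
    ext y
    simp only [Set.mem_preimage, hs, hs', Set.mem_setOf_eq, hqφ y]
  -- the linear factor transforms to `N *ᵥ y`
  have hmvφ : ∀ (y : Rd d) (p : Fin d), mvL B p (φ y) = (N *ᵥ fun k => y k) p := by
    intro y p
    rw [mvL_apply]
    have h2 : (fun k => φ y k) = P *ᵥ (fun k => y k) := by
      funext m; exact hφcoord y m
    have : ∑ l, B⁻¹ p l * φ y l = (B⁻¹ *ᵥ (P *ᵥ fun k => y k)) p := by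
      rw [← h2]; simp [Matrix.mulVec, dotProduct]
    rw [this, Matrix.mulVec_mulVec, hMP]
  -- the integrand and its transform
  set H : Rd d → ℝ := fun x => 2 * c * (qB B x ^ (c - 1)) * B⁻¹ i j
      + 4 * c * (c - 1) * (qB B x ^ (c - 2)) * mvL B i x * mvL B j x with hH
  have hint_eq : ∫ x in s, hessB B x i j = ∫ x in s, H x := by
    refine setIntegral_congr_fun hsmeas fun x hx => ?_
    have hqx : 0 < qB B x := lt_of_lt_of_le (pow_pos ha 2) hx.1
    exact hessB_eq B hsym hqx i j
  -- compactness and integrability on the shell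
  set K : Set (Rd d) := {y : Rd d | a ^ 2 ≤ r2 y ∧ r2 y ≤ b ^ 2} with hK
  have hKclosed : IsClosed K := by
    have : K = r2 ⁻¹' (Set.Icc (a ^ 2) (b ^ 2)) := rfl
    rw [this]
    exact IsClosed.preimage continuous_r2 isClosed_Icc
  have hr2norm : ∀ y : Rd d, r2 y = ‖y‖ ^ 2 := by
    intro y
    rw [EuclideanSpace.norm_eq, Real.sq_sqrt]
    · refine Finset.sum_congr rfl fun m _ => ?_
      rw [Real.norm_eq_abs, sq_abs]
    · exact Finset.sum_nonneg fun m _ => sq_nonneg _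
  have hKcompact : IsCompact K := by
    refine (isCompact_closedBall (0 : Rd d) b).of_isClosed_subset hKclosed ?_
    intro y hy
    rw [Metric.mem_closedBall, dist_zero_right]
    have h1 : ‖y‖ ^ 2 ≤ b ^ 2 := by rw [← hr2norm]; exact hy.2
    have hb : (0:ℝ) < b := lt_trans ha hab
    nlinarith [norm_nonneg y]
  have hKpos : ∀ y ∈ K, r2 y ≠ 0 := by
    intro y hy
    have : (0:ℝ) < a ^ 2 := pow_pos ha 2
    exact (lt_of_lt_of_le this hy.1).ne'
  have hs'K : s' ⊆ K := fun y hy => ⟨hy.1, le_of_lt hy.2⟩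
  have hintOn : ∀ f : Rd d → ℝ, ContinuousOn f K → IntegrableOn f s' volume := by
    intro f hf
    exact ((hf.integrableOn_compact hKcompact)).mono_set hs'K
  have hcontpow : ∀ p : ℝ, ContinuousOn (fun y : Rd d => r2 y ^ p) K := by
    intro p
    exact ContinuousOn.rpow_const (continuous_r2.continuousOn) fun y hy => Or.inl (hKpos y hy)
  -- basic integrands
  set g : Fin d → Fin d → Rd d → ℝ := fun k l y => r2 y ^ (c - 2) * (y k * y l) with hg
  set f1 : Rd d → ℝ := fun y => r2 y ^ (c - 1) with hf1
  have hint_g : ∀ k l, IntegrableOn (g k l) s' volume := by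
    intro k l
    refine hintOn _ (ContinuousOn.mul (hcontpow _) ?_)
    exact (((continuous_coord k).mul (continuous_coord l))).continuousOn
  have hint_f1 : IntegrableOn f1 s' volume := hintOn _ (hcontpow _)
  -- the two basic integrals
  set J : Fin d → Fin d → ℝ := fun k l => ∫ y in s', g k l y with hJ
  have k0 : Fin d := ⟨0, by omega⟩
  set J0 : ℝ := J k0 k0 with hJ0
  set Kint : ℝ := ∫ y in s', f1 y with hKint
  -- shell is invariant under the isometries
  have hpre_neg : ∀ k, ⇑(negIso (d := d) k) ⁻¹' s' = s' := by
    intro k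
    ext y
    simp only [Set.mem_preimage, hs', Set.mem_setOf_eq, r2_negIso]
  have hpre_swap : ∀ k l, ⇑(swapIso (d := d) k l) ⁻¹' s' = s' := by
    intro k l
    ext y
    simp only [Set.mem_preimage, hs', Set.mem_setOf_eq, r2_swapIso]
  -- off-diagonal integrals vanish
  have hJoff : ∀ k l, k ≠ l → J k l = 0 := by
    intro k l hkl
    have h := integral_comp_isometry (negIso k) (g k l) s' (hpre_neg k)
    have hptw : ∀ y : Rd d, g k l (negIso k y) = -(g k l y) := by
      intro y
      rw [hg]
      simp only
      rw [r2_negIso, negIso_apply, negIso_apply, if_pos rfl, if_neg (Ne.symm hkl)]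
      ring
    simp only [hptw] at h
    rw [integral_neg] at h
    have heq : J k l = ∫ y in s', g k l y := rfl
    rw [heq]
    linarith [h]
  -- diagonal integrals are all equal
  have hJdiag : ∀ k, J k k = J0 := by
    intro k
    have h := integral_comp_isometry (swapIso k k0) (g k k) s' (hpre_swap k k0)
    have hptw : ∀ y : Rd d, g k k (swapIso k k0 y) = g k0 k0 y := by
      intro y
      rw [hg]
      simp only
      rw [r2_swapIso, swapIso_apply, Equiv.swap_apply_left]
    simp only [hptw] at h
    rw [hJ0]
    exact h.symm
  -- sum rule: Kint = d * J0
  have hKd : Kint = (d : ℝ) * J0 := by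
    have hptw : ∀ y ∈ s', f1 y = ∑ k, g k k y := by
      intro y hy
      have hr2ne : r2 y ≠ 0 := hKpos y (hs'K hy)
      rw [hf1, hg]
      simp only
      have h21 : c - 1 = (c - 2) + 1 := by ring
      rw [h21, Real.rpow_add_one hr2ne]
      rw [← Finset.mul_sum]
      congr 1
      rw [r2]
      exact Finset.sum_congr rfl fun m _ => by ring
    rw [hKint, setIntegral_congr_fun hs'meas hptw,
      integral_finset_sum _ fun k _ => hint_g k k]
    rw [Finset.sum_congr rfl fun k _ => hJdiag k]
    simp [mul_comm]
  -- N-sums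
  have hNNsum : ∀ p q : Fin d, ∑ k, N p k * N q k = B⁻¹ p q := by
    intro p q
    have : ∑ k, N p k * N q k = ∑ k, N p k * N k q :=
      Finset.sum_congr rfl fun k _ => by rw [hNsym q k]
    rw [this, ← Matrix.mul_apply, hNN]
  -- pointwise expansion of the transformed integrand
  have hHφ : ∀ y : Rd d, H (φ y) = (2 * c * B⁻¹ i j) * f1 y
      + ∑ k, ∑ l, ((4 * c * (c - 1)) * (N i k * N j l)) * g k l y := by
    intro y
    rw [hH]
    simp only
    rw [hqφ y, hmvφ y i, hmvφ y j]
    have hmv : ∀ p : Fin d, (N *ᵥ fun k => y k) p = ∑ k, N p k * y k := by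
      intro p; simp [Matrix.mulVec, dotProduct]
    rw [hmv i, hmv j]
    have hexp : ∑ k, ∑ l, ((4 * c * (c - 1)) * (N i k * N j l)) * g k l y
        = 4 * c * (c - 1) * (r2 y ^ (c - 2)) * ((∑ k, N i k * y k) * (∑ l, N j l * y l)) := by
      rw [Finset.sum_mul_sum, Finset.mul_sum]
      refine Finset.sum_congr rfl fun k _ => ?_
      rw [Finset.mul_sum]
      refine Finset.sum_congr rfl fun l _ => ?_
      rw [hg]
      simp only
      ring
    rw [hexp, hf1]
    simp only
    ring
  -- compute the transformed integral
  have htrans : ∫ y in s', H (φ y) = 0 := by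
    have hsplit : ∫ y in s', H (φ y)
        = (2 * c * B⁻¹ i j) * Kint
          + ∑ k, ∑ l, ((4 * c * (c - 1)) * (N i k * N j l)) * J k l := by
      rw [setIntegral_congr_fun hs'meas fun y _ => hHφ y]
      rw [integral_add ((hint_f1.const_mul _))
        (integrable_finset_sum _ fun k _ => integrable_finset_sum _ fun l _ =>
          (hint_g k l).const_mul _)]
      rw [integral_const_mul, integral_finset_sum _ fun k _ =>
        integrable_finset_sum _ fun l _ => (hint_g k l).const_mul _]
      congr 1
      refine Finset.sum_congr rfl fun k _ => ?_
      rw [integral_finset_sum _ fun l _ => (hint_g k l).const_mul _]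
      exact Finset.sum_congr rfl fun l _ => integral_const_mul _ _
    have hsum2 : ∑ k, ∑ l, ((4 * c * (c - 1)) * (N i k * N j l)) * J k l
        = (4 * c * (c - 1)) * B⁻¹ i j * J0 := by
      have hinner : ∀ k, ∑ l, ((4 * c * (c - 1)) * (N i k * N j l)) * J k l
          = ((4 * c * (c - 1)) * (N i k * N j k)) * J0 := by
        intro k
        rw [Finset.sum_eq_single k]
        · rw [hJdiag k]
        · intro l _ hlk
          rw [hJoff k l (Ne.symm hlk), mul_zero]
        · intro h; exact absurd (Finset.mem_univ k) h
      rw [Finset.sum_congr rfl fun k _ => hinner k, ← Finset.sum_mul, ← Finset.mul_sum,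
        hNNsum i j]
    have hcc : 2 * c * (d : ℝ) + 4 * c * (c - 1) = 0 := by
      rw [hc]; unfold cE; ring
    rw [hsplit, hsum2, hKd]
    linear_combination (B⁻¹ i j * J0) * hcc
  -- change of variables
  have hmap : Measure.map φ volume = ENNReal.ofReal |(P.det)⁻¹| • volume := by
    have h := Measure.map_linearMap_addHaar_eq_smul_addHaar (volume : Measure (Rd d)) hTLdetne
    rw [hdetTL] at h
    exact h
  have h2 : ∫ x in s, H x ∂(Measure.map φ volume) = ∫ y in s', H (φ y) := by
    rw [hφemb.setIntegral_map, hpre]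
  have h3 : ∫ x in s, H x ∂(Measure.map φ volume) = |(P.det)⁻¹| * ∫ x in s, H x := by
    rw [hmap, Measure.restrict_smul, integral_smul_measure,
      ENNReal.toReal_ofReal (abs_nonneg _), smul_eq_mul]
  have habs : |(P.det)⁻¹| ≠ 0 := by
    simp only [ne_eq, abs_eq_zero, inv_eq_zero]
    exact hPdetne
  have hchain : |(P.det)⁻¹| * ∫ x in s, H x = 0 := by
    rw [← h3, h2, htrans]
  rw [hint_eq]
  exact (mul_eq_zero.mp hchain).resolve_left habs
end
end
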